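/- If a binary word f starts with 110 and ends with 100 (and thus has a 2-tilde-error overlap of type RR of shift |f|−3), then f is tilde-non-isometric; in particular, writing f = 110·w1 = w2·100, the words α̃ = w2·1010·w1 and δ̃ = w2·0101·w1 form a pair of tilde-witnesses for f. -/

import Mathlib

/-- Edit operations on binary words: `R i` flips the bit at position `i`,
`S i` swaps the (distinct) bits at positions `i` and `i+1`. Positions are 0-based. -/
inductive TOp where
  | R (i : ℕ)
  | S (i : ℕ)
deriving DecidableEq

namespace TOp

def apply : TOp → List Bool → List Bool
  | R i, w => w.set i (!(w.getD i false))
  | S i, w => (w.set i (w.getD (i+1) false)).set (i+1) (w.getD i false)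

def valid : TOp → List Bool → Prop
  | R i, w => i < w.length
  | S i, w => i + 1 < w.length ∧ w.getD i false ≠ w.getD (i+1) false

/-- The set of positions modified by an operation. -/
def positions : TOp → Finset ℕ
  | R i => {i}
  | S i => {i, i+1}

/-- The (leftmost) position of an operation. -/
def pos : TOp → ℕ
  | R i => i
  | S i => i

def isR : TOp → Prop
  | R _ => True
  | S _ => False

def isS : TOp → Prop
  | R _ => False
  | S _ => True

end TOp

/-- All operations of a sequence are valid when applied successively starting from `w`. -/
def validSeq : List TOp → List Bool → Prop
  | [], _ => True
  | o :: os, w => o.valid w ∧ validSeq os (o.apply w)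

def applySeq : List TOp → List Bool → List Bool
  | [], w => w
  | o :: os, w => applySeq os (o.apply w)

/-- `ops` is a tilde-transformation from `u` to `v`. -/
def Transforms (ops : List TOp) (u v : List Bool) : Prop :=
  validSeq ops u ∧ applySeq ops u = v

/-- The swap-mismatch (tilde) distance between two words. -/
noncomputable def tdist (u v : List Bool) : ℕ :=
  sInf { n | ∃ ops : List TOp, ops.length = n ∧ Transforms ops u v }

/-- Each position of the word is modified at most once along the sequence. -/
def eachPosOnce (ops : List TOp) : Prop :=
  ops.Pairwise fun o o' => Disjoint o.positions o'.positions

/-- A minimal tilde-transformation: length `tdist u v`, each position changed at most once. -/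
def MinimalTransf (ops : List TOp) (u v : List Bool) : Prop :=
  Transforms ops u v ∧ ops.length = tdist u v ∧ eachPosOnce ops

/-- The list of all words `w_0 = u, w_1, …, w_h` visited by the transformation. -/
def trajectory (ops : List TOp) (u : List Bool) : List (List Bool) :=
  List.scanl (fun w o => o.apply w) u ops

/-- `w` avoids `f` as a factor. -/
def FFree (f w : List Bool) : Prop := ¬ f <:+: w

/-- All words along the transformation are `f`-free. -/
def FreeTransf (f : List Bool) (ops : List TOp) (u : List Bool) : Prop :=
  ∀ w ∈ trajectory ops u, FFree f w

/-- `f` is tilde-isometric. -/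
def TildeIsometric (f : List Bool) : Prop :=
  ∀ u v : List Bool, u.length = v.length → f.length < u.length →
    FFree f u → FFree f v →
      ∃ ops : List TOp, MinimalTransf ops u v ∧ FreeTransf f ops u

/-- `(u,v)` is a pair of tilde-witnesses for `f`. -/
def Witnesses (f u v : List Bool) : Prop :=
  u.length = v.length ∧ FFree f u ∧ FFree f v ∧ 2 ≤ tdist u v ∧
    ∀ ops : List TOp, MinimalTransf ops u v → ¬ FreeTransf f ops u

/-- Hamming distance between equal-length words (number of mismatch positions). -/
def hdist (u v : List Bool) : ℕ := ((u.zip v).filter fun p => p.1 != p.2).length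

/-! The two witnesses differ exactly in their middle blocks `1010` and `0101`, at positions
`|w2|, …, |w2| + 3`. An operation touches at most two adjacent positions, so the distance is 2
and a minimal transformation consists of the swaps at `|w2|` and `|w2| + 2`. Whichever comes
first, the intermediate word is `w2·0110·w1`, containing `110·w1 = f`, or `w2·1001·w1`,
containing `w2·100 = f`.

Both witnesses avoid `f`: an occurrence at offset `k` near either end would place `100` or `110`,
both of the shape `1?0`, inside the middle block, which has no such factor; an occurrence further
inside reads the letter `f[k+1]` as `1` through `f = w2·100` and as `0` through `f = 110·w1`. -/

namespace List

variable {α : Type*}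

theorem getD_append_of_eq_length_add (l l' : List α) {n i : ℕ} (h : n = l.length + i) (d : α) :
    (l ++ l').getD n d = l'.getD i d := by
  rw [getD_append_right _ _ _ _ (by omega), h, Nat.add_sub_cancel_left]

theorem getD_of_append_append_eq {t f t' x : List α} (h : t ++ f ++ t' = x) {n i : ℕ}
    (hn : n = t.length + i) (hi : i < f.length) (d : α) : x.getD n d = f.getD i d := by
  rw [← h, append_assoc, getD_append_of_eq_length_add _ _ hn, getD_append _ _ _ _ hi]

theorem getD_append_append_length_add (p X s : List α) {i : ℕ} (hi : i < X.length) (d : α) :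
    (p ++ X ++ s).getD (p.length + i) d = X.getD i d := by
  rw [append_assoc, getD_append_of_eq_length_add _ _ rfl, getD_append _ _ _ _ hi]

theorem set_append_append_length_add (p X s : List α) {i : ℕ} (hi : i < X.length) (a : α) :
    (p ++ X ++ s).set (p.length + i) a = p ++ X.set i a ++ s := by
  simp [hi]

end List

namespace TOp

def shift (k : ℕ) : TOp → TOp
  | R i => R (k + i)
  | S i => S (k + i)

theorem getD_apply_of_not_mem {o : TOp} {j : ℕ} (hj : j ∉ o.positions) (w : List Bool) :
    (o.apply w).getD j false = w.getD j false := by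
  cases o <;> simp_all [apply, positions, List.getElem?_set_ne, eq_comm]

theorem le_and_le_succ_of_mem_positions {o : TOp} {j : ℕ} (hj : j ∈ o.positions) :
    o.pos ≤ j ∧ j ≤ o.pos + 1 := by
  cases o <;> simp only [positions, pos, Finset.mem_insert, Finset.mem_singleton] at hj ⊢ <;>
    omega

theorem apply_shift_append {o : TOp} {X : List Bool} (ho : o.valid X) (p s : List Bool) :
    (o.shift p.length).apply (p ++ X ++ s) = p ++ o.apply X ++ s := by
  cases o with
  | R i =>
    simp only [valid, shift, apply] at ho ⊢
    rw [List.getD_append_append_length_add _ _ _ ho, List.set_append_append_length_add _ _ _ ho]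
  | S i =>
    simp only [valid, shift, apply] at ho ⊢
    rw [add_assoc, List.getD_append_append_length_add _ _ _ ho.1,
      List.getD_append_append_length_add _ _ _ (by omega),
      List.set_append_append_length_add _ _ _ (by omega),
      List.set_append_append_length_add _ _ _ (by simpa using ho.1)]

theorem valid_shift_append {o : TOp} {X : List Bool} (ho : o.valid X) (p s : List Bool) :
    (o.shift p.length).valid (p ++ X ++ s) := by
  cases o with
  | R i =>
    simp only [valid, shift, List.length_append] at ho ⊢
    omega
  | S i =>
    simp only [valid, shift] at ho ⊢
    rw [add_assoc, List.getD_append_append_length_add _ _ _ ho.1,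
      List.getD_append_append_length_add _ _ _ (by omega)]
    exact ⟨by simp only [List.length_append]; omega, ho.2⟩

theorem eq_S_of_cover_four {o₁ o₂ : TOp} {p : ℕ}
    (h : ∀ j, p ≤ j → j < p + 4 → j ∈ o₁.positions ∨ j ∈ o₂.positions) :
    o₁ = S p ∧ o₂ = S (p + 2) ∨ o₁ = S (p + 2) ∧ o₂ = S p := by
  have h0 := h p le_rfl (by omega)
  have h1 := h (p + 1) (by omega) (by omega)
  have h2 := h (p + 2) (by omega) (by omega)
  have h3 := h (p + 3) (by omega) (by omega)
  cases o₁ <;> cases o₂ <;>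
    simp only [positions, Finset.mem_insert, Finset.mem_singleton, reduceCtorEq, false_and,
      S.injEq, or_false] at h0 h1 h2 h3 ⊢ <;> omega

end TOp

theorem Transforms.shift_append {ops : List TOp} {X Y : List Bool} (h : Transforms ops X Y)
    (p s : List Bool) :
    Transforms (ops.map (TOp.shift p.length)) (p ++ X ++ s) (p ++ Y ++ s) := by
  induction ops generalizing X with
  | nil => exact ⟨trivial, congrArg (p ++ · ++ s) h.2⟩
  | cons o os ih =>
    obtain ⟨⟨ho, hos⟩, happ⟩ := h
    have hrest := ih ⟨hos, happ⟩
    rw [← TOp.apply_shift_append ho] at hrest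
    exact ⟨⟨TOp.valid_shift_append ho p s, hrest.1⟩, hrest.2⟩

theorem getD_applySeq_of_forall_not_mem {ops : List TOp} {j : ℕ}
    (hj : ∀ o ∈ ops, j ∉ o.positions) (w : List Bool) :
    (applySeq ops w).getD j false = w.getD j false := by
  induction ops generalizing w with
  | nil => rfl
  | cons o os ih =>
    simp only [List.forall_mem_cons] at hj
    rw [applySeq, ih hj.2, TOp.getD_apply_of_not_mem hj.1]

theorem exists_mem_positions_of_getD_ne {ops : List TOp} {u : List Bool} {j : ℕ}
    (hj : u.getD j false ≠ (applySeq ops u).getD j false) : ∃ o ∈ ops, j ∈ o.positions := by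
  by_contra! h
  exact hj (getD_applySeq_of_forall_not_mem h u).symm

theorem two_le_length_of_getD_ne {ops : List TOp} {u : List Bool} {i j : ℕ} (hij : i + 2 ≤ j)
    (hi : u.getD i false ≠ (applySeq ops u).getD i false)
    (hj : u.getD j false ≠ (applySeq ops u).getD j false) : 2 ≤ ops.length := by
  obtain ⟨o, ho, hio⟩ := exists_mem_positions_of_getD_ne hi
  obtain ⟨o', ho', hjo'⟩ := exists_mem_positions_of_getD_ne hj
  have hne : o ≠ o' := by
    rintro rfl
    have := TOp.le_and_le_succ_of_mem_positions hio
    have := TOp.le_and_le_succ_of_mem_positions hjo'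
    omega
  match ops, ho, ho' with
  | [_], ho, ho' =>
    exact absurd ((List.mem_singleton.1 ho).trans (List.mem_singleton.1 ho').symm) hne
  | _ :: _ :: _, _, _ => simp

theorem tdist_le_length {ops : List TOp} {u v : List Bool} (h : Transforms ops u v) :
    tdist u v ≤ ops.length :=
  Nat.sInf_le ⟨ops, rfl, h⟩

theorem le_tdist {u v : List Bool} {n : ℕ} (hex : ∃ ops, Transforms ops u v)
    (h : ∀ ops, Transforms ops u v → n ≤ ops.length) : n ≤ tdist u v := by
  obtain ⟨ops, hops⟩ := hex
  exact le_csInf ⟨_, ops, rfl, hops⟩ fun _ ⟨ops, hlen, hops⟩ => hlen ▸ h ops hops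

section Alternating

variable (p s : List Bool)

theorem transforms_alternating :
    Transforms [.S p.length, .S (p.length + 2)]
      (p ++ [true, false, true, false] ++ s) (p ++ [false, true, false, true] ++ s) :=
  Transforms.shift_append (ops := [.S 0, .S 2])
    ⟨by simp [validSeq, TOp.valid, TOp.apply], rfl⟩ p s

theorem tdist_alternating :
    tdist (p ++ [true, false, true, false] ++ s) (p ++ [false, true, false, true] ++ s) = 2 := by
  refine le_antisymm (tdist_le_length (transforms_alternating p s))
    (le_tdist ⟨_, transforms_alternating p s⟩ fun ops hops => ?_)
  refine two_le_length_of_getD_ne (u := p ++ [true, false, true, false] ++ s)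
    (i := p.length + 0) (j := p.length + 3) (by omega) ?_ ?_ <;>
    rw [hops.2, List.getD_append_append_length_add _ _ _ (by simp),
      List.getD_append_append_length_add _ _ _ (by simp)] <;> decide

theorem mem_trajectory_of_transforms_alternating {ops : List TOp}
    (h : Transforms ops (p ++ [true, false, true, false] ++ s)
      (p ++ [false, true, false, true] ++ s))
    (hlen : ops.length = 2) :
    p ++ [false, true, true, false] ++ s ∈
        trajectory ops (p ++ [true, false, true, false] ++ s) ∨
      p ++ [true, false, false, true] ++ s ∈
        trajectory ops (p ++ [true, false, true, false] ++ s) := by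
  obtain ⟨o₁, o₂, rfl⟩ := List.length_eq_two.1 hlen
  have hcover :
      ∀ j, p.length ≤ j → j < p.length + 4 → j ∈ o₁.positions ∨ j ∈ o₂.positions := by
    intro j hj hj'
    obtain ⟨i, hi, rfl⟩ : ∃ i < 4, j = p.length + i := ⟨j - p.length, by omega, by omega⟩
    obtain ⟨o, ho, hjo⟩ :=
      exists_mem_positions_of_getD_ne (ops := [o₁, o₂]) (j := p.length + i)
      (by rw [h.2, List.getD_append_append_length_add _ _ _ hi,
            List.getD_append_append_length_add _ _ _ hi]
          interval_cases i <;> decide)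
    simp only [List.mem_cons, List.not_mem_nil, or_false] at ho
    rcases ho with rfl | rfl <;> simp [hjo]
  have htraj : o₁.apply (p ++ [true, false, true, false] ++ s) ∈
      trajectory [o₁, o₂] (p ++ [true, false, true, false] ++ s) := by
    simp [trajectory]
  rcases TOp.eq_S_of_cover_four hcover with ⟨rfl, -⟩ | ⟨rfl, -⟩
  · exact .inl (TOp.apply_shift_append (o := .S 0) (X := [true, false, true, false])
      (by simp [TOp.valid]) p s ▸ htraj)
  · exact .inr (TOp.apply_shift_append (o := .S 2) (X := [true, false, true, false])
      (by simp [TOp.valid]) p s ▸ htraj)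

end Alternating

theorem false_of_interior_occurrence {f p s X t t' : List Bool}
    (hs : f = [true, true, false] ++ s) (hp : f = p ++ [true, false, false])
    (hX : X.length = 4) (hocc : t ++ f ++ t' = p ++ X ++ s)
    (hk₁ : 2 ≤ t.length) (hk₂ : t.length < p.length) : False := by
  have hfp : f.length = p.length + 3 := by simp [hp]
  have h0 : f.getD (t.length + 1) false = false :=
    calc f.getD (t.length + 1) false = s.getD (t.length - 2) false := by
          rw [hs]
          exact List.getD_append_of_eq_length_add _ _
            (by simp only [List.length_cons, List.length_nil]; omega) _
      _ = (p ++ X ++ s).getD (t.length + (p.length + 2)) false :=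
          (List.getD_append_of_eq_length_add _ _ (by simp only [List.length_append]; omega) _).symm
      _ = f.getD (p.length + 2) false := List.getD_of_append_append_eq hocc rfl (by omega) _
      _ = false := by rw [hp, List.getD_append_of_eq_length_add _ _ rfl]; rfl
  have h1 : f.getD (t.length + 1) false = true := by
    rcases (show t.length + 1 ≤ p.length from hk₂).lt_or_eq with hlt | heq
    · calc f.getD (t.length + 1) false = p.getD (t.length + 1) false := by
            rw [hp]; exact List.getD_append _ _ _ _ hlt
        _ = (p ++ X ++ s).getD (t.length + 1) false := by
            rw [List.append_assoc, List.getD_append _ _ _ _ hlt]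
        _ = f.getD 1 false := List.getD_of_append_append_eq hocc rfl (by omega) _
        _ = true := by rw [hs]; rfl
    · rw [heq, hp,
        List.getD_append_of_eq_length_add _ _ (add_zero _).symm]
      rfl
  exact Bool.false_ne_true (h0.symm.trans h1)

theorem ffree_of_overlap {f p s : List Bool} {a b c d : Bool}
    (hs : f = [true, true, false] ++ s) (hp : f = p ++ [true, false, false])
    (hac : a = true → c = true) (hbd : b = true → d = true) :
    FFree f (p ++ [a, b, c, d] ++ s) := by
  rintro ⟨t, t', hocc⟩
  have hfp : f.length = p.length + 3 := by simp [hp]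
  have hfs : f.length = s.length + 3 := by rw [hs, List.length_append, add_comm]; rfl
  have hk : t.length ≤ p.length + 1 := by
    have := congrArg List.length hocc
    simp only [List.length_append, List.length_cons, List.length_nil] at this
    omega
  have hxf (n i : ℕ) (hn : n = t.length + i) (hi : i < p.length + 3) :
      (p ++ [a, b, c, d] ++ s).getD n false = f.getD i false :=
    List.getD_of_append_append_eq hocc hn (by omega) _
  have hxX (n i : ℕ) (hn : n = p.length + i) (hi : i < 4) :
      (p ++ [a, b, c, d] ++ s).getD n false = [a, b, c, d].getD i false :=
    hn ▸ List.getD_append_append_length_add _ _ _ hi _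
  have hwindow : ∀ j ≤ 1, [a, b, c, d].getD j false = true →
      [a, b, c, d].getD (j + 2) false = false → False := by
    intro j hj h h'
    interval_cases j <;> simp_all
  have hfm : f.getD (p.length + 0) false = true := by
    rw [hp, List.getD_append_of_eq_length_add _ _ rfl]; rfl
  have hfm2 : f.getD (p.length + 2) false = false := by
    rw [hp, List.getD_append_of_eq_length_add _ _ rfl]; rfl
  rcases (by omega :
      t.length ≤ 1 ∨ p.length ≤ t.length ∨ 2 ≤ t.length ∧ t.length < p.length)
    with hk' | hk' | ⟨hk₁, hk₂⟩
  · refine hwindow t.length hk' ?_ ?_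
    · rw [← hxX (t.length + (p.length + 0)) _ (by omega) (by omega), hxf _ _ rfl (by omega), hfm]
    · rw [← hxX (t.length + (p.length + 2)) _ (by omega) (by omega), hxf _ _ rfl (by omega),
        hfm2]
  · refine hwindow (t.length - p.length) (by omega) ?_ ?_
    · rw [← hxX (t.length + 0) _ (by omega) (by omega), hxf _ _ rfl (by omega), hs]; rfl
    · rw [← hxX (t.length + 2) _ (by omega) (by omega), hxf _ _ rfl (by omega), hs]; rfl
  · exact false_of_interior_occurrence hs hp rfl hocc hk₁ hk₂

theorem not_tildeIsometric_of_witnesses {f u v : List Bool} (h : Witnesses f u v)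
    (hlen : f.length < u.length) : ¬ TildeIsometric f := fun hiso =>
  let ⟨ops, hmin, hfree⟩ := hiso u v h.1 hlen h.2.1 h.2.2.1
  h.2.2.2.2 ops hmin hfree

theorem stmt18 (f w1 w2 : List Bool)
    (h1 : f = [true, true, false] ++ w1)
    (h2 : f = w2 ++ [true, false, false]) :
    ¬ TildeIsometric f ∧
    Witnesses f (w2 ++ [true, false, true, false] ++ w1)
                (w2 ++ [false, true, false, true] ++ w1) := by
  have hW : Witnesses f (w2 ++ [true, false, true, false] ++ w1)
      (w2 ++ [false, true, false, true] ++ w1) := by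
    refine ⟨by simp, ffree_of_overlap h1 h2 id id, ffree_of_overlap h1 h2 id id,
      (tdist_alternating w2 w1).ge, ?_⟩
    rintro ops ⟨htr, hops, -⟩ hfree
    rcases mem_trajectory_of_transforms_alternating w2 w1 htr
        (hops.trans (tdist_alternating w2 w1)) with h | h
    · exact hfree _ h ⟨w2 ++ [false], [], by simp [h1]⟩
    · exact hfree _ h ⟨[], true :: w1, by simp [h2]⟩
  have hlen : f.length < (w2 ++ [true, false, true, false] ++ w1).length := by
    simp only [h1, List.length_append, List.length_cons, List.length_nil]
    omega
  exact ⟨not_tildeIsometric_of_witnesses hW hlen, hW⟩
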